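/- arXiv:1402.4881 — 2 statements merged into one kernel-verified Lean document; each statement's English description precedes it below -/
import Mathlib

section
/- If X and X̄ are selected independently and uniformly at random from the type class T_P of an n-type P on a finite alphabet X, and Y is generated from X via n independent uses of a channel W from X to a finite alphabet Y, then for every γ > 0, the probability that the empirical mutual information between X̄ and Y exceeds γ is at most (n+1)^(|X|+|X||Y|) · exp(-nγ) (exp base 2). -/
open Finset

/-- Empirical distribution (type) of a sequence. -/
noncomputable def empDist {X : Type*} [DecidableEq X] {n : ℕ} (x : Fin n → X) (a : X) : ℝ :=
  ((Finset.univ.filter fun i => x i = a).card : ℝ) / n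

/-- Empirical joint distribution (joint type) of a pair of sequences. -/
noncomputable def empJoint {X Y : Type*} [DecidableEq X] [DecidableEq Y] {n : ℕ}
    (x : Fin n → X) (y : Fin n → Y) (ab : X × Y) : ℝ :=
  ((Finset.univ.filter fun i => x i = ab.1 ∧ y i = ab.2).card : ℝ) / n

/-- Shannon entropy, base 2. -/
noncomputable def ent2 {Z : Type*} [Fintype Z] (p : Z → ℝ) : ℝ :=
  ∑ z, -(p z * Real.logb 2 (p z))

/-- Empirical mutual information of a pair of sequences. -/
noncomputable def empMI {X Y : Type*} [Fintype X] [Fintype Y] [DecidableEq X] [DecidableEq Y]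
    {n : ℕ} (x : Fin n → X) (y : Fin n → Y) : ℝ :=
  ent2 (empDist x) + ent2 (empDist y) - ent2 (empJoint x y)

/-- The type class of an `n`-type `P`. -/
noncomputable def typeClass {X : Type*} [Fintype X] [DecidableEq X] (n : ℕ) (P : X → ℝ) :
    Finset (Fin n → X) :=
  Finset.univ.filter fun x => ∀ a, empDist x a = P a

/-!
For a fixed output `y`, bound `1[Î > γ] ≤ 2^(n(Î - γ))` and sum over `x̄ ∈ T_P`, grouping the
`x̄` by the joint type of `(x̄, y)`; there are at most `(n+1)^(|X||Y|)` joint types. For `x̄` of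
type `P`, `2^(nÎ(x̄ ∧ y)) P^n(x̄) = V^n(x̄ | y)` with `V` the empirical conditional distribution,
so the `x̄` sharing a joint type with `y` contribute at most `1 / P^n(x̄)`. Since `T_P` is the most
likely type class under `P^n`, `|T_P| P^n(x̄) ≥ (n+1)^(-|X|)`. Hence for every `y` at most a
fraction `(n+1)^(|X|+|X||Y|) 2^(-nγ)` of `T_P` has `Î(x̄ ∧ y) > γ`, and averaging over the input
and the channel output preserves this bound.
-/

lemma factorial_mul_pow_le_factorial_mul_pow_self (k m : ℕ) :
    k.factorial * k ^ m ≤ m.factorial * k ^ k := by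
  rcases le_total k m with h | h
  · calc k.factorial * k ^ m = k.factorial * k ^ (m - k) * k ^ k := by
          rw [mul_assoc, ← pow_add, Nat.sub_add_cancel h]
      _ ≤ m.factorial * k ^ k := Nat.mul_le_mul_right _ (Nat.factorial_mul_pow_sub_le_factorial h)
  · calc k.factorial * k ^ m = m.factorial * k.descFactorial (k - m) * k ^ m := by
          rw [← Nat.factorial_mul_descFactorial (Nat.sub_le k m), Nat.sub_sub_self h]
      _ ≤ m.factorial * k ^ (k - m) * k ^ m := by gcongr; exact Nat.descFactorial_le_pow _ _
      _ = m.factorial * k ^ k := by rw [mul_assoc, ← pow_add, Nat.sub_add_cancel h]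

section TypeCount

variable {ι α : Type*} [Fintype ι] [DecidableEq α]

def typeCount (x : ι → α) (a : α) : ℕ := #{i | x i = a}

lemma typeCount_le (x : ι → α) (a : α) : typeCount x a ≤ Fintype.card ι :=
  card_filter_le _ _

lemma typeCount_apply_pos (x : ι → α) (i : ι) : 0 < typeCount x (x i) :=
  card_pos.mpr ⟨i, mem_filter.mpr ⟨mem_univ i, rfl⟩⟩

lemma typeCount_comp_perm (x : ι → α) (σ : Equiv.Perm ι) : typeCount (x ∘ σ) = typeCount x := by
  ext a
  exact card_equiv σ fun i => by simp

lemma exists_perm_comp_eq [DecidableEq ι] {x x' : ι → α} (h : typeCount x = typeCount x') :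
    ∃ σ : Equiv.Perm ι, x' ∘ σ = x := by
  have e a : {i // x i = a} ≃ {i // x' i = a} :=
    Fintype.equivOfCardEq (by simpa [Fintype.card_subtype, typeCount] using congrFun h a)
  refine ⟨(Equiv.sigmaFiberEquiv x).symm.trans
    ((Equiv.sigmaCongrRight e).trans (Equiv.sigmaFiberEquiv x')), funext fun i => ?_⟩
  exact (e (x i) ⟨i, rfl⟩).prop

variable [Fintype α]

lemma sum_typeCount (x : ι → α) : ∑ a, typeCount x a = Fintype.card ι := by
  simp only [typeCount, ← card_univ (α := ι)]
  exact (card_eq_sum_card_fiberwise fun i _ => mem_univ (x i)).symm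

lemma prod_comp_eq_prod_pow_typeCount {M : Type*} [CommMonoid M] (x : ι → α)
    (f : α → M) : ∏ i, f (x i) = ∏ a, f a ^ typeCount x a := by
  rw [← prod_fiberwise_of_maps_to (fun i _ => mem_univ (x i))]
  refine prod_congr rfl fun a _ => ?_
  rw [prod_congr rfl fun i hi => by rw [(mem_filter.mp hi).2], prod_const, typeCount]

lemma prod_comp_eq_of_typeCount_eq {M : Type*} [CommMonoid M] {x x' : ι → α}
    (h : typeCount x = typeCount x') (f : α → M) : ∏ i, f (x i) = ∏ i, f (x' i) := by
  rw [prod_comp_eq_prod_pow_typeCount, prod_comp_eq_prod_pow_typeCount, h]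

lemma sum_typeCount_prod_left {β : Type*} [DecidableEq β] (x : ι → α) (y : ι → β) (b : β) :
    ∑ a, typeCount (Function.prod x y) (a, b) = typeCount y b := by
  rw [typeCount, card_eq_sum_card_fiberwise fun i _ => mem_univ (x i)]
  refine sum_congr rfl fun a _ => ?_
  rw [typeCount, filter_filter]
  congr 1
  ext i
  simp [Prod.ext_iff, and_comm]

lemma sum_le_pow_mul_of_sum_fiber_le {κ : Type*} (s : Finset κ) (φ : κ → ι → α)
    (f : κ → ℝ) {M : ℝ} (hM : 0 ≤ M)
    (h : ∀ x ∈ s, ∑ x' ∈ s with typeCount (φ x') = typeCount (φ x), f x' ≤ M) :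
    ∑ x ∈ s, f x ≤ (Fintype.card ι + 1) ^ Fintype.card α * M := by
  have hcard : #(s.image (typeCount ∘ φ)) ≤ (Fintype.card ι + 1) ^ Fintype.card α := by
    calc #(s.image (typeCount ∘ φ))
        ≤ #(Fintype.piFinset fun _ : α => range (Fintype.card ι + 1)) :=
          card_le_card <| image_subset_iff.mpr fun x _ => Fintype.mem_piFinset.mpr fun a =>
            mem_range.mpr (Nat.lt_succ_of_le (typeCount_le _ a))
      _ = (Fintype.card ι + 1) ^ Fintype.card α := by simp
  rw [← sum_fiberwise_of_maps_to fun x hx => mem_image_of_mem (typeCount ∘ φ) hx]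
  calc ∑ k ∈ s.image (typeCount ∘ φ), ∑ x ∈ s with (typeCount ∘ φ) x = k, f x
      ≤ ∑ _k ∈ s.image (typeCount ∘ φ), M := sum_le_sum fun k hk => by
        obtain ⟨x, hx, rfl⟩ := mem_image.mp hk
        exact h x hx
    _ ≤ (Fintype.card ι + 1) ^ Fintype.card α * M := by
        rw [sum_const, nsmul_eq_mul]
        exact mul_le_mul_of_nonneg_right (by exact_mod_cast hcard) hM

variable [DecidableEq ι]

def typeClassOf (x₀ : ι → α) : Finset (ι → α) := {x | typeCount x = typeCount x₀}

lemma typeClassOf_eq_of_mem {x₀ x : ι → α} (hx : x ∈ typeClassOf x₀) :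
    typeClassOf x = typeClassOf x₀ := by
  simp only [typeClassOf, (mem_filter.mp hx).2]

lemma card_typeClassOf_mul_prod_factorial (x₀ : ι → α) :
    #(typeClassOf x₀) * ∏ a, (typeCount x₀ a).factorial = (Fintype.card ι).factorial := by
  have hstab : #{σ : Equiv.Perm ι | x₀ ∘ σ = x₀} = ∏ a, (typeCount x₀ a).factorial := by
    simpa only [Fintype.card_subtype, typeCount] using DomMulAct.stabilizer_card x₀
  have hfib : ∀ x ∈ typeClassOf x₀,
      #{σ : Equiv.Perm ι | x₀ ∘ σ = x} = ∏ a, (typeCount x₀ a).factorial := by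
    intro x hx
    obtain ⟨τ, rfl⟩ := exists_perm_comp_eq (mem_filter.mp hx).2
    rw [← hstab]
    refine card_equiv (Equiv.mulRight τ⁻¹) fun σ => ?_
    simp only [mem_filter, mem_univ, true_and, Equiv.coe_mulRight, Equiv.Perm.coe_mul,
      ← Function.comp_assoc]
    rw [Equiv.Perm.coe_inv, Equiv.comp_symm_eq]
  have hmaps : ∀ σ ∈ (univ : Finset (Equiv.Perm ι)), x₀ ∘ σ ∈ typeClassOf x₀ := fun σ _ =>
    mem_filter.mpr ⟨mem_univ _, typeCount_comp_perm x₀ σ⟩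
  rw [← Fintype.card_perm, ← card_univ, card_eq_sum_card_fiberwise hmaps, sum_congr rfl hfib,
    sum_const, smul_eq_mul]

/-- Divided by `card ι ^ card ι`, both sides are probabilities of type classes under the i.i.d. law
with the empirical distribution of `x₀`: the type class of `x₀` is the most likely one. -/
lemma card_typeClassOf_mul_prod_le (x₀ x : ι → α) :
    #(typeClassOf x) * ∏ i, typeCount x₀ (x i) ≤ #(typeClassOf x₀) * ∏ i, typeCount x₀ (x₀ i) := by
  set k := typeCount x₀
  set k' := typeCount x
  have hpos : 0 < (∏ a, (k' a).factorial) * ∏ a, (k a).factorial :=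
    Nat.mul_pos (prod_pos fun a _ => (k' a).factorial_pos) (prod_pos fun a _ => (k a).factorial_pos)
  rw [prod_comp_eq_prod_pow_typeCount x, prod_comp_eq_prod_pow_typeCount x₀]
  refine Nat.le_of_mul_le_mul_right ?_ hpos
  calc #(typeClassOf x) * (∏ a, k a ^ k' a) * ((∏ a, (k' a).factorial) * ∏ a, (k a).factorial)
      = (#(typeClassOf x) * ∏ a, (k' a).factorial) * ∏ a, ((k a).factorial * k a ^ k' a) := by
        rw [prod_mul_distrib]; ring
    _ ≤ (#(typeClassOf x₀) * ∏ a, (k a).factorial) * ∏ a, ((k' a).factorial * k a ^ k a) := by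
        rw [card_typeClassOf_mul_prod_factorial, card_typeClassOf_mul_prod_factorial]
        exact Nat.mul_le_mul_left _
          (prod_le_prod' fun a _ => factorial_mul_pow_le_factorial_mul_pow_self _ _)
    _ = #(typeClassOf x₀) * (∏ a, k a ^ k a)
          * ((∏ a, (k' a).factorial) * ∏ a, (k a).factorial) := by
        rw [prod_mul_distrib]; ring

end TypeCount

section Stochastic

variable {ι α β : Type*} [Fintype ι] [DecidableEq ι] [Fintype α]

lemma sum_prod_eq_one_of_sum_eq_one {R : Type*} [CommSemiring R] (w : ι → α → R)
    (hw : ∀ i, ∑ a, w i a = 1) : ∑ x : ι → α, ∏ i, w i (x i) = 1 := by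
  rw [← Fintype.prod_sum]
  simp [hw]

lemma card_mul_le_one_of_prod_eq (w : ι → α → ℝ) (hw0 : ∀ i a, 0 ≤ w i a)
    (hw1 : ∀ i, ∑ a, w i a = 1) (S : Finset (ι → α)) (x₀ : ι → α)
    (hS : ∀ x ∈ S, ∏ i, w i (x i) = ∏ i, w i (x₀ i)) :
    #S * ∏ i, w i (x₀ i) ≤ 1 := by
  calc #S * ∏ i, w i (x₀ i) = ∑ x ∈ S, ∏ i, w i (x i) := by
        rw [sum_congr rfl hS, sum_const, nsmul_eq_mul]
    _ ≤ ∑ x : ι → α, ∏ i, w i (x i) :=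
        sum_le_sum_of_subset_of_nonneg (subset_univ S) fun x _ _ => prod_nonneg fun i _ => hw0 i _
    _ = 1 := sum_prod_eq_one_of_sum_eq_one w hw1

variable [DecidableEq α] [DecidableEq β] [Fintype β]

def condTypeClass (x : ι → α) (y : ι → β) : Finset (ι → α) :=
  {x' | typeCount (Function.prod x' y) = typeCount (Function.prod x y)}

lemma card_condTypeClass_mul_prod_le_one (x : ι → α) (y : ι → β) :
    #(condTypeClass x y)
        * ∏ i, (typeCount (Function.prod x y) (x i, y i) : ℝ) / typeCount y (y i) ≤ 1 := by
  set g : α × β → ℝ := fun ab => (typeCount (Function.prod x y) ab : ℝ) / typeCount y ab.2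
  refine card_mul_le_one_of_prod_eq (fun i a => g (a, y i)) (fun i a => by positivity)
    (fun i => ?_) _ x fun x' hx' => prod_comp_eq_of_typeCount_eq (mem_filter.mp hx').2 g
  have := typeCount_apply_pos y i
  simp only [g]
  rw [← sum_div, ← Nat.cast_sum, sum_typeCount_prod_left]
  exact div_self (by positivity)

end Stochastic

section Empirical

variable {α β : Type*} [DecidableEq α] [DecidableEq β] {n : ℕ}

lemma empDist_eq (x : Fin n → α) : empDist x = fun a => (typeCount x a : ℝ) / n := rfl

lemma empJoint_eq_empDist_prod (x : Fin n → α) (y : Fin n → β) :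
    empJoint x y = empDist (Function.prod x y) := by
  ext ab
  simp only [empJoint, empDist, Function.prod_apply, Prod.ext_iff]

lemma empDist_apply_pos (hn : 0 < n) (x : Fin n → α) (i : Fin n) : 0 < empDist x (x i) := by
  have := typeCount_apply_pos x i
  rw [empDist_eq]
  positivity

lemma prod_empDist_pos (hn : 0 < n) (x : Fin n → α) : 0 < ∏ i, empDist x (x i) :=
  prod_pos fun i _ => empDist_apply_pos hn x i

lemma prod_empDist_comp_eq (x₀ x : Fin n → α) :
    ∏ i, empDist x₀ (x i) = ((∏ i, typeCount x₀ (x i) : ℕ) : ℝ) / (n : ℝ) ^ n := by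
  rw [empDist_eq, prod_div_distrib, prod_const, card_univ, Fintype.card_fin, Nat.cast_prod]

variable [Fintype α] [Fintype β]

lemma sum_empDist (hn : 0 < n) (x : Fin n → α) : ∑ a, empDist x a = 1 := by
  rw [empDist_eq, ← sum_div, ← Nat.cast_sum, sum_typeCount, Fintype.card_fin]
  exact div_self (by positivity)

lemma typeClass_eq_typeClassOf (hn : 0 < n) {P : α → ℝ} {x₀ : Fin n → α}
    (hx₀ : x₀ ∈ typeClass n P) :
    typeClass n P = typeClassOf x₀ := by
  have hP : P = empDist x₀ := funext fun a => ((mem_filter.mp hx₀).2 a).symm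
  have hn' : (n : ℝ) ≠ 0 := by positivity
  ext x
  simp only [typeClass, typeClassOf, mem_filter, mem_univ, true_and, hP, empDist_eq, funext_iff,
    div_left_inj' hn', Nat.cast_inj]

lemma two_rpow_neg_mul_ent2_empDist (hn : 0 < n) (x : Fin n → α) :
    (2 : ℝ) ^ (-(n : ℝ) * ent2 (empDist x)) = ∏ i, empDist x (x i) := by
  have hexp : -(n : ℝ) * ent2 (empDist x)
      = ∑ a, (typeCount x a : ℝ) * Real.logb 2 (empDist x a) := by
    rw [ent2, mul_sum]
    refine sum_congr rfl fun a _ => ?_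
    rw [empDist_eq]
    field_simp
  rw [hexp, Real.rpow_sum_of_pos two_pos, prod_comp_eq_prod_pow_typeCount x]
  refine prod_congr rfl fun a _ => ?_
  rcases (typeCount x a).eq_zero_or_pos with h0 | hpos
  · simp [h0]
  · have hp : 0 < empDist x a := by rw [empDist_eq]; positivity
    rw [mul_comm, Real.rpow_mul zero_le_two, Real.rpow_logb two_pos one_lt_two.ne' hp,
      Real.rpow_natCast]

lemma two_rpow_mul_empMI_mul_prod_empDist (hn : 0 < n) (x : Fin n → α) (y : Fin n → β) :
    (2 : ℝ) ^ ((n : ℝ) * empMI x y) * ∏ i, empDist x (x i)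
      = ∏ i, (typeCount (Function.prod x y) (x i, y i) : ℝ) / typeCount y (y i) := by
  have hjoint : (2 : ℝ) ^ ((n : ℝ) * empMI x y) * (∏ i, empDist x (x i)) * ∏ i, empDist y (y i)
      = ∏ i, empDist (Function.prod x y) (Function.prod x y i) := by
    rw [← two_rpow_neg_mul_ent2_empDist hn, ← two_rpow_neg_mul_ent2_empDist hn,
      ← two_rpow_neg_mul_ent2_empDist hn, mul_assoc, ← Real.rpow_add two_pos,
      ← Real.rpow_add two_pos, empMI, empJoint_eq_empDist_prod]
    ring_nf
  rw [← mul_div_cancel_right₀ (_ * _) (prod_empDist_pos hn y).ne', hjoint, ← prod_div_distrib]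
  refine prod_congr rfl fun i _ => ?_
  simp only [empDist_eq, Function.prod_apply]
  have : (n : ℝ) ≠ 0 := by positivity
  field_simp

lemma empMI_eq_of_typeCount_eq {x x' : Fin n → α} (y : Fin n → β)
    (hx : typeCount x' = typeCount x)
    (hxy : typeCount (Function.prod x' y) = typeCount (Function.prod x y)) :
    empMI x' y = empMI x y := by
  simp only [empMI, empJoint_eq_empDist_prod, empDist_eq, hx, hxy]

lemma one_le_pow_mul_card_typeClassOf_mul_prod_empDist (hn : 0 < n) (x₀ : Fin n → α) :
    1 ≤ ((n : ℝ) + 1) ^ Fintype.card α * (#(typeClassOf x₀) * ∏ i, empDist x₀ (x₀ i)) := by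
  have hclass : ∀ x : Fin n → α,
      ∑ x' ∈ (univ : Finset (Fin n → α)) with typeCount x' = typeCount x, ∏ i, empDist x₀ (x' i)
        ≤ #(typeClassOf x₀) * ∏ i, empDist x₀ (x₀ i) := by
    intro x
    rw [sum_congr rfl fun x' hx' => prod_comp_eq_of_typeCount_eq (mem_filter.mp hx').2 _,
      sum_const, nsmul_eq_mul, prod_empDist_comp_eq, prod_empDist_comp_eq, mul_div_assoc',
      mul_div_assoc']
    exact div_le_div_of_nonneg_right (by exact_mod_cast card_typeClassOf_mul_prod_le x₀ x)
      (by positivity)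
  calc (1 : ℝ) = ∑ x : Fin n → α, ∏ i, empDist x₀ (x i) :=
        (sum_prod_eq_one_of_sum_eq_one (fun _ => empDist x₀) fun _ => sum_empDist hn x₀).symm
    _ ≤ ((n : ℝ) + 1) ^ Fintype.card α * (#(typeClassOf x₀) * ∏ i, empDist x₀ (x₀ i)) := by
        simpa using sum_le_pow_mul_of_sum_fiber_le univ id _
          (by have := prod_empDist_pos hn x₀; positivity)
          fun x _ => hclass x

lemma card_condTypeClass_mul_two_rpow_empMI_le (hn : 0 < n) (x : Fin n → α) (y : Fin n → β) :
    #(condTypeClass x y) * (2 : ℝ) ^ ((n : ℝ) * empMI x y)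
      ≤ ((n : ℝ) + 1) ^ Fintype.card α * #(typeClassOf x) := by
  refine le_of_mul_le_mul_right ?_ (prod_empDist_pos hn x)
  calc _ = #(condTypeClass x y)
          * ∏ i, (typeCount (Function.prod x y) (x i, y i) : ℝ) / typeCount y (y i) := by
        rw [mul_assoc, two_rpow_mul_empMI_mul_prod_empDist hn]
    _ ≤ 1 := card_condTypeClass_mul_prod_le_one x y
    _ ≤ _ := by
        rw [mul_assoc]
        exact one_le_pow_mul_card_typeClassOf_mul_prod_empDist hn x

lemma sum_two_rpow_empMI_le (hn : 0 < n) (x₀ : Fin n → α) (y : Fin n → β) :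
    ∑ x ∈ typeClassOf x₀, (2 : ℝ) ^ ((n : ℝ) * empMI x y)
      ≤ ((n : ℝ) + 1) ^ (Fintype.card α * Fintype.card β)
        * (((n : ℝ) + 1) ^ Fintype.card α * #(typeClassOf x₀)) := by
  have h := sum_le_pow_mul_of_sum_fiber_le (typeClassOf x₀) (fun x => Function.prod x y)
    (fun x => (2 : ℝ) ^ ((n : ℝ) * empMI x y)) (M := ((n : ℝ) + 1) ^ Fintype.card α
      * #(typeClassOf x₀)) (by positivity) fun x hx => ?_
  · simpa only [Fintype.card_fin, Fintype.card_prod, Nat.cast_add, Nat.cast_one] using h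
  calc ∑ x' ∈ typeClassOf x₀ with typeCount (Function.prod x' y) = typeCount (Function.prod x y),
        (2 : ℝ) ^ ((n : ℝ) * empMI x' y)
      = #{x' ∈ typeClassOf x₀ | typeCount (Function.prod x' y) = typeCount (Function.prod x y)}
          * (2 : ℝ) ^ ((n : ℝ) * empMI x y) := by
        rw [← nsmul_eq_mul, ← sum_const]
        refine sum_congr rfl fun x' hx' => ?_
        obtain ⟨hx'T, hx'y⟩ := mem_filter.mp hx'
        rw [empMI_eq_of_typeCount_eq y ((mem_filter.mp hx'T).2.trans (mem_filter.mp hx).2.symm)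
          hx'y]
    _ ≤ #(condTypeClass x y) * (2 : ℝ) ^ ((n : ℝ) * empMI x y) := by
        gcongr
        exact fun x' hx' => mem_filter.mpr ⟨mem_univ _, (mem_filter.mp hx').2⟩
    _ ≤ _ := by
        rw [← typeClassOf_eq_of_mem hx]
        exact card_condTypeClass_mul_two_rpow_empMI_le hn x y

lemma sum_ite_lt_empMI_le (hn : 0 < n) (x₀ : Fin n → α) (y : Fin n → β) (γ : ℝ) :
    ∑ x ∈ typeClassOf x₀, (if γ < empMI x y then (1 : ℝ) else 0)
      ≤ ((n : ℝ) + 1) ^ (Fintype.card α + Fintype.card α * Fintype.card β)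
        * (2 : ℝ) ^ (-(n : ℝ) * γ) * #(typeClassOf x₀) := by
  have hmarkov : ∀ t : ℝ, (if γ < t then (1 : ℝ) else 0)
      ≤ (2 : ℝ) ^ (-(n : ℝ) * γ) * (2 : ℝ) ^ ((n : ℝ) * t) := fun t => by
    rw [← Real.rpow_add two_pos]
    split_ifs with h
    · exact Real.one_le_rpow one_le_two (by nlinarith [(Nat.cast_pos.mpr hn : (0 : ℝ) < n)])
    · positivity
  calc ∑ x ∈ typeClassOf x₀, (if γ < empMI x y then (1 : ℝ) else 0)
      ≤ (2 : ℝ) ^ (-(n : ℝ) * γ) * ∑ x ∈ typeClassOf x₀, (2 : ℝ) ^ ((n : ℝ) * empMI x y) := by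
        rw [mul_sum]
        exact sum_le_sum fun x _ => hmarkov _
    _ ≤ (2 : ℝ) ^ (-(n : ℝ) * γ) * (((n : ℝ) + 1) ^ (Fintype.card α * Fintype.card β)
          * (((n : ℝ) + 1) ^ Fintype.card α * #(typeClassOf x₀))) := by
        gcongr
        exact sum_two_rpow_empMI_le hn x₀ y
    _ = _ := by ring

end Empirical

lemma sum_uniform_mul_channel_le {ι X Y : Type*} [Fintype ι] [DecidableEq ι] [Fintype Y]
    (T : Finset (ι → X)) (hT : T.Nonempty) (W : X → Y → ℝ) (hW0 : ∀ a b, 0 ≤ W a b)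
    (hW1 : ∀ a, ∑ b, W a b = 1) (F : (ι → X) → (ι → Y) → ℝ) (E : ℝ)
    (hF : ∀ y, ∑ xb ∈ T, F xb y ≤ E * #T) :
    ∑ x ∈ T, ∑ xb ∈ T, ∑ y : ι → Y,
        (1 / (#T : ℝ)) * (1 / (#T : ℝ)) * (∏ i, W (x i) (y i)) * F xb y ≤ E := by
  have hcard : (0 : ℝ) < #T := by exact_mod_cast hT.card_pos
  have hrow : ∀ x ∈ T, ∑ xb ∈ T, ∑ y : ι → Y,
      (1 / (#T : ℝ)) * (1 / (#T : ℝ)) * (∏ i, W (x i) (y i)) * F xb y ≤ E / #T := by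
    intro x _
    calc ∑ xb ∈ T, ∑ y : ι → Y,
          (1 / (#T : ℝ)) * (1 / (#T : ℝ)) * (∏ i, W (x i) (y i)) * F xb y
        = ∑ y : ι → Y, (1 / (#T : ℝ)) * (1 / (#T : ℝ)) * (∏ i, W (x i) (y i))
            * ∑ xb ∈ T, F xb y := by
          rw [sum_comm]
          simp only [mul_sum]
      _ ≤ ∑ y : ι → Y, (1 / (#T : ℝ)) * (1 / (#T : ℝ)) * (∏ i, W (x i) (y i)) * (E * #T) :=
          sum_le_sum fun y _ => mul_le_mul_of_nonneg_left (hF y)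
            (by have := prod_nonneg fun i (_ : i ∈ univ) => hW0 (x i) (y i); positivity)
      _ = E / #T := by
          rw [← sum_mul, ← mul_sum, sum_prod_eq_one_of_sum_eq_one (fun i => W (x i))
            fun i => hW1 _]
          field_simp
  calc _ ≤ ∑ _x ∈ T, E / #T := sum_le_sum hrow
    _ = E := by
        rw [sum_const, nsmul_eq_mul]
        field_simp

theorem stmt0_general {X Y : Type*} [Fintype X] [Fintype Y] [DecidableEq X] [DecidableEq Y]
    (n : ℕ) (hn : 0 < n) (P : X → ℝ)
    (hT : (typeClass n P).Nonempty)
    (W : X → Y → ℝ) (hW0 : ∀ x y, 0 ≤ W x y) (hW1 : ∀ x, ∑ y, W x y = 1)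
    (γ : ℝ) :
    ∑ x ∈ typeClass n P, ∑ xb ∈ typeClass n P, ∑ y : Fin n → Y,
        (1 / ((typeClass n P).card : ℝ)) * (1 / ((typeClass n P).card : ℝ)) *
          (∏ i, W (x i) (y i)) *
          (if γ < empMI xb y then 1 else 0)
      ≤ ((n : ℝ) + 1) ^ (Fintype.card X + Fintype.card X * Fintype.card Y) *
          (2 : ℝ) ^ (-(n : ℝ) * γ) := by
  obtain ⟨x₀, hx₀⟩ := hT
  rw [typeClass_eq_typeClassOf hn hx₀]
  have hx₀T : x₀ ∈ typeClassOf x₀ := mem_filter.mpr ⟨mem_univ _, rfl⟩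
  exact sum_uniform_mul_channel_le (typeClassOf x₀) ⟨x₀, hx₀T⟩ W hW0 hW1
    (fun xb y => if γ < empMI xb y then 1 else 0) _ fun y => sum_ite_lt_empMI_le hn x₀ y γ

/-- if `X` and `X̄` are independent and uniform on the type class of an
`n`-type `P`, and `Y` is the output of the memoryless channel `W` on input `X`, then
`Pr[Î(X̄ ∧ Y) > γ] ≤ (n+1)^(|X|+|X||Y|) · 2^(-nγ)`. -/
theorem stmt0 {X Y : Type*} [Fintype X] [Fintype Y] [DecidableEq X] [DecidableEq Y]
    (n : ℕ) (hn : 0 < n) (P : X → ℝ)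
    (hP0 : ∀ a, 0 ≤ P a) (hP1 : ∑ a, P a = 1)
    (hPtype : ∀ a, ∃ k : ℕ, P a = (k : ℝ) / n)
    (hT : (typeClass n P).Nonempty)
    (W : X → Y → ℝ) (hW0 : ∀ x y, 0 ≤ W x y) (hW1 : ∀ x, ∑ y, W x y = 1)
    (γ : ℝ) (hγ : 0 < γ) :
    ∑ x ∈ typeClass n P, ∑ xb ∈ typeClass n P, ∑ y : Fin n → Y,
        (1 / ((typeClass n P).card : ℝ)) * (1 / ((typeClass n P).card : ℝ)) *
          (∏ i, W (x i) (y i)) *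
          (if γ < empMI xb y then 1 else 0)
      ≤ ((n : ℝ) + 1) ^ (Fintype.card X + Fintype.card X * Fintype.card Y) *
          (2 : ℝ) ^ (-(n : ℝ) * γ) :=
  stmt0_general n hn P hT W hW0 hW1 γ
end

section
/- Information-spectrum converse for Slepian–Wolf with erasures (Miyake–Kanaya): every Slepian–Wolf code with M messages for a source pair (X,Y) with total error probability ε_t satisfies, for every γ > 0, ε_t ≥ Pr[(1/n) log(1/P_{X|Y}(X|Y)) ≥ (1/n) log M + γ] − exp(−nγ). -/
open Finset
open scoped Classical

lemma aux_key (n : ℕ) (hn : 0 < n) (Mr : ℝ) (hMr : 1 ≤ Mr) (γ : ℝ)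
    (j q : ℝ) (hj : 0 ≤ j) (hjq : j ≤ q)
    (h : (1 / (n : ℝ)) * Real.logb 2 (1 / (j / q))
        ≥ (1 / (n : ℝ)) * Real.logb 2 Mr + γ) :
    j ≤ q * (2 : ℝ) ^ (-(n : ℝ) * γ) / Mr := by
  have hMr0 : (0:ℝ) < Mr := lt_of_lt_of_le one_pos hMr
  have hq0 : 0 ≤ q := le_trans hj hjq
  have hE : (0:ℝ) < (2:ℝ) ^ ((n:ℝ) * γ) := Real.rpow_pos_of_pos two_pos _
  rcases eq_or_lt_of_le hj with hj0 | hj0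
  · rw [← hj0]; positivity
  · have hq : 0 < q := lt_of_lt_of_le hj0 hjq
    have hn' : (0:ℝ) < n := by exact_mod_cast hn
    have h1 : 1 / (j / q) = q / j := one_div_div j q
    rw [h1] at h
    have h2 : Real.logb 2 Mr + (n:ℝ) * γ ≤ Real.logb 2 (q / j) := by
      have h3 := mul_le_mul_of_nonneg_left h hn'.le
      have hne : (n:ℝ) ≠ 0 := ne_of_gt hn'
      field_simp at h3
      nlinarith [h3]
    have h4 : Mr * (2:ℝ) ^ ((n:ℝ) * γ) ≤ q / j := by
      have := (Real.rpow_le_rpow_left_iff (x := 2) one_lt_two).mpr h2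
      rwa [Real.rpow_add two_pos, Real.rpow_logb two_pos (by norm_num) hMr0,
        Real.rpow_logb two_pos (by norm_num) (div_pos hq hj0)] at this
    have h5 : Mr * (2:ℝ) ^ ((n:ℝ) * γ) * j ≤ q := (le_div_iff₀ hj0).mp h4
    rw [neg_mul, Real.rpow_neg (by norm_num : (0:ℝ) ≤ 2)]
    rw [le_div_iff₀ hMr0, ← div_eq_mul_inv, le_div_iff₀ hE]
    nlinarith [h5]

/-- Miyake–Kanaya information-spectrum converse for Slepian–Wolf with
erasures: every code with `M` messages and total error probability `εt` satisfies, for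
every `γ > 0`,
`εt ≥ Pr[(1/n)·log₂(1/P_{X|Y}(X|Y)) ≥ (1/n)·log₂ M + γ] − 2^{−nγ}`. -/
theorem stmt11 {X Y : Type*} [Fintype X] [Fintype Y] [DecidableEq X] [DecidableEq Y]
    (n : ℕ) (hn : 0 < n) (M : ℕ) (hM : 0 < M)
    (J : (Fin n → X) × (Fin n → Y) → ℝ)                 -- joint source law on X^n × Y^n
    (hJ0 : ∀ p, 0 ≤ J p) (hJ1 : ∑ p, J p = 1)
    (f : (Fin n → X) → Fin M)
    (φ : Fin M → (Fin n → Y) → Option (Fin n → X))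
    (εt : ℝ)
    (hεt : εt = ∑ p : (Fin n → X) × (Fin n → Y),
        J p * (if φ (f p.1) p.2 ≠ some p.1 then 1 else 0))
    (γ : ℝ) (hγ : 0 < γ) :
    (∑ p : (Fin n → X) × (Fin n → Y),
        J p * (if (1 / (n : ℝ)) *
              Real.logb 2 (1 / (J p / (∑ x' : Fin n → X, J (x', p.2))))
            ≥ (1 / (n : ℝ)) * Real.logb 2 (M : ℝ) + γ then 1 else 0))
      - (2 : ℝ) ^ (-(n : ℝ) * γ) ≤ εt := by
  classical
  set A : (Fin n → X) × (Fin n → Y) → Prop := fun p =>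
    (1 / (n : ℝ)) * Real.logb 2 (1 / (J p / (∑ x' : Fin n → X, J (x', p.2))))
      ≥ (1 / (n : ℝ)) * Real.logb 2 (M : ℝ) + γ with hA
  set b : ℝ := (2:ℝ) ^ (-(n:ℝ) * γ) with hb
  have hb0 : (0:ℝ) < b := Real.rpow_pos_of_pos two_pos _
  set S2 : ℝ := ∑ p : (Fin n → X) × (Fin n → Y),
      J p * (if A p ∧ φ (f p.1) p.2 = some p.1 then 1 else 0) with hS2
  have step1 : (∑ p : (Fin n → X) × (Fin n → Y),
      J p * (if A p then 1 else 0)) ≤ εt + S2 := by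
    rw [hεt, hS2, ← Finset.sum_add_distrib]
    apply Finset.sum_le_sum
    intro p _
    have := hJ0 p
    by_cases h1 : φ (f p.1) p.2 = some p.1 <;> by_cases h2 : A p <;>
      simp [h1, h2] <;> linarith
  have hQ0 : ∀ y : Fin n → Y, (0:ℝ) ≤ ∑ x' : Fin n → X, J (x', y) := fun y =>
    Finset.sum_nonneg fun x _ => hJ0 (x, y)
  have step2 : S2 ≤ b := by
    rw [hS2, Fintype.sum_prod_type_right]
    have inner : ∀ y : Fin n → Y,
        (∑ x : Fin n → X, J (x, y) * (if A (x, y) ∧ φ (f x) y = some x then 1 else 0))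
          ≤ (∑ x' : Fin n → X, J (x', y)) * b := by
      intro y
      set Q : ℝ := ∑ x' : Fin n → X, J (x', y) with hQ
      set C : Finset (Fin n → X) :=
        Finset.univ.filter (fun x => A (x, y) ∧ φ (f x) y = some x) with hC
      have hsum : (∑ x : Fin n → X,
          J (x, y) * (if A (x, y) ∧ φ (f x) y = some x then 1 else 0))
          = ∑ x ∈ C, J (x, y) := by
        rw [hC, Finset.sum_filter]
        apply Finset.sum_congr rfl
        intro x _
        by_cases h : A (x, y) ∧ φ (f x) y = some x <;> simp [h]
      rw [hsum]
      have hcard : C.card ≤ M := by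
        have : ∀ x ∈ C, f x ∈ (Finset.univ : Finset (Fin M)) := fun x _ =>
          Finset.mem_univ _
        have hinj : Set.InjOn f C := by
          intro x1 h1 x2 h2 hf
          simp only [hC, Finset.coe_filter, Set.mem_setOf_eq, Finset.mem_univ,
            true_and] at h1 h2
          have e1 := h1.2
          have e2 := h2.2
          rw [hf] at e1
          rw [e1] at e2
          exact Option.some_injective _ e2
        calc C.card ≤ (Finset.univ : Finset (Fin M)).card :=
              Finset.card_le_card_of_injOn f this hinj
          _ = M := by simp
      have hterm : ∀ x ∈ C, J (x, y) ≤ Q * b / M := by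
        intro x hx
        simp only [hC, Finset.mem_filter, Finset.mem_univ, true_and] at hx
        have hMr : (1:ℝ) ≤ (M:ℝ) := by exact_mod_cast hM
        have hjq : J (x, y) ≤ Q :=
          Finset.single_le_sum (fun x' _ => hJ0 (x', y)) (Finset.mem_univ x)
        exact aux_key n hn (M:ℝ) hMr γ (J (x, y)) Q (hJ0 (x, y)) hjq hx.1
      calc (∑ x ∈ C, J (x, y)) ≤ C.card • (Q * b / M) :=
            Finset.sum_le_card_nsmul C _ _ hterm
        _ = (C.card : ℝ) * (Q * b / M) := by rw [nsmul_eq_mul]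
        _ ≤ (M : ℝ) * (Q * b / M) := by
            apply mul_le_mul_of_nonneg_right
            · exact_mod_cast hcard
            · have hQnn : (0:ℝ) ≤ Q := hQ0 y
              have hMnn : (0:ℝ) < (M:ℝ) := by exact_mod_cast hM
              exact div_nonneg (mul_nonneg hQnn hb0.le) hMnn.le
        _ = Q * b := by
            field_simp
    calc (∑ y : Fin n → Y, ∑ x : Fin n → X,
          J (x, y) * (if A (x, y) ∧ φ (f x) y = some x then 1 else 0))
        ≤ ∑ y : Fin n → Y, (∑ x' : Fin n → X, J (x', y)) * b :=
          Finset.sum_le_sum fun y _ => inner y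
      _ = (∑ y : Fin n → Y, ∑ x' : Fin n → X, J (x', y)) * b := by
          rw [Finset.sum_mul]
      _ = 1 * b := by rw [← Fintype.sum_prod_type_right, hJ1]
      _ = b := one_mul b
  have e : (∑ p : (Fin n → X) × (Fin n → Y),
        J p * (if (1 / (n : ℝ)) *
              Real.logb 2 (1 / (J p / (∑ x' : Fin n → X, J (x', p.2))))
            ≥ (1 / (n : ℝ)) * Real.logb 2 (M : ℝ) + γ then 1 else 0))
      = ∑ p : (Fin n → X) × (Fin n → Y), J p * (if A p then 1 else 0) := rfl
  rw [e]
  linarith [step1, step2]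
end
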